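/- For the equation X^n + A_1 X^{n−1} + ... + A_n = 0 with circulant d×d complex coefficients, the number of circulant solutions equals n^d if and only if for each i = 0,...,d−1 the scalar polynomial x^n + b_1^{(i)} x^{n−1} + ... + b_n^{(i)} has n distinct complex roots, where b_k^{(i)} = Σ_j a_{k,j} r^{−ij} and A_k = circ(a_{k,0},...,a_{k,d−1}). -/

import Mathlib

open Matrix

def Cyc (d : ℕ) [NeZero d] : Matrix (Fin d) (Fin d) ℂ :=
  fun i j => if j = i + 1 then 1 else 0

def circ {d : ℕ} (a : Fin d → ℂ) : Matrix (Fin d) (Fin d) ℂ :=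
  fun i j => a (j - i)

def IsCirc {d : ℕ} (A : Matrix (Fin d) (Fin d) ℂ) : Prop :=
  ∃ a : Fin d → ℂ, A = circ a

noncomputable def ζ (d : ℕ) : ℂ := Complex.exp (2 * Real.pi * Complex.I / d)

noncomputable def Sm (d : ℕ) : Matrix (Fin d) (Fin d) ℂ :=
  fun i j => ζ d ^ ((i : ℕ) * (j : ℕ))

/-!
The DFT matrix `F = (w ^ (i * j))` of a primitive `d`-th root of unity `w` diagonalises every
circulant matrix: `F * circ a = diagonal b * F` with `b i = ∑ j, a j * w⁻¹ ^ (i * j)`.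
Conjugating the matrix equation by `F`, `circ x` is a solution exactly when, for every `i`,
the `i`-th DFT coefficient of `x` is a root of the `i`-th scalar polynomial. As the DFT is a
bijection, the circulant solutions correspond to tuples of roots, so there are
`∏ i, #(distinct roots of the i-th polynomial)` of them; each factor is at most `n`, so the
product is `n ^ d` iff every factor equals `n`.
-/

open Polynomial

section MonicEval

variable {n : ℕ}

/-- The coefficient `A k` is the paper's `A_{k+1}`. -/
def monicEval {S : Type*} [Semiring S] (A : Fin n → S) (x : S) : S :=
  x ^ n + ∑ k, A k * x ^ (n - 1 - (k : ℕ))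

theorem map_monicEval {S T : Type*} [Semiring S] [Semiring T] (f : S →+* T) (A : Fin n → S)
    (x : S) : f (monicEval A x) = monicEval (fun k => f (A k)) (f x) := by
  simp [monicEval, map_sum]

theorem monicEval_apply {ι : Type*} {R : ι → Type*} [∀ i, Semiring (R i)]
    (A : Fin n → ∀ i, R i) (y : ∀ i, R i) (i : ι) :
    monicEval A y i = monicEval (fun k => A k i) (y i) :=
  map_monicEval (Pi.evalRingHom R i) A y

theorem monicEval_diagonal {ι R : Type*} [Fintype ι] [DecidableEq ι] [Semiring R]
    (b : Fin n → ι → R) (y : ι → R) :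
    monicEval (fun k => diagonal (b k)) (diagonal y) = diagonal (monicEval b y) :=
  (map_monicEval (diagonalRingHom ι R) b y).symm

theorem SemiconjBy.monicEval {S : Type*} [Semiring S] {v x y : S} {A B : Fin n → S}
    (hA : ∀ k, SemiconjBy v (A k) (B k)) (hx : SemiconjBy v x y) :
    SemiconjBy v (monicEval A x) (monicEval B y) := by
  refine (hx.pow_right n).add_right ?_
  unfold SemiconjBy
  rw [Finset.mul_sum, Finset.sum_mul]
  exact Finset.sum_congr rfl fun k _ => ((hA k).mul_right (hx.pow_right _)).eq

theorem degree_sum_C_mul_X_pow_sub_lt {R : Type*} [Semiring R] (b : Fin n → R) :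
    (∑ k, C (b k) * X ^ (n - 1 - (k : ℕ))).degree < (n : WithBot ℕ) := by
  refine (degree_sum_le _ _).trans_lt ((Finset.sup_lt_iff (WithBot.bot_lt_coe n)).2 fun k _ => ?_)
  exact (degree_C_mul_X_pow_le _ _).trans_lt (Nat.cast_lt.mpr (by have := k.isLt; omega))

theorem monic_monicEval {R : Type*} [Semiring R] (b : Fin n → R) :
    (monicEval (fun k => C (b k)) X).Monic :=
  monic_X_pow_add (degree_sum_C_mul_X_pow_sub_lt b)

theorem natDegree_monicEval {R : Type*} [Semiring R] [Nontrivial R] (b : Fin n → R) :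
    (monicEval (fun k => C (b k)) X).natDegree = n := by
  rw [monicEval, natDegree_add_eq_left_of_degree_lt, natDegree_X_pow]
  rw [degree_X_pow]
  exact degree_sum_C_mul_X_pow_sub_lt b

theorem eval_monicEval {R : Type*} [CommRing R] (b : Fin n → R) (t : R) :
    (monicEval (fun k => C (b k)) X).eval t = monicEval b t := by
  simpa using map_monicEval (evalRingHom t) (fun k => C (b k)) X

theorem mem_roots_toFinset_monicEval {K : Type*} [Field K] [DecidableEq K] (b : Fin n → K)
    (t : K) : t ∈ (monicEval (fun k => C (b k)) X).roots.toFinset ↔ monicEval b t = 0 := by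
  rw [Multiset.mem_toFinset, mem_roots (monic_monicEval b).ne_zero, IsRoot, eval_monicEval]

theorem card_roots_toFinset_monicEval_le {K : Type*} [Field K] [DecidableEq K]
    (b : Fin n → K) : (monicEval (fun k => C (b k)) X).roots.toFinset.card ≤ n :=
  (Multiset.toFinset_card_le _).trans ((card_roots' _).trans (natDegree_monicEval b).le)

end MonicEval

theorem SemiconjBy.eq_zero_iff_of_isUnit {M₀ : Type*} [MonoidWithZero M₀] {a x y : M₀}
    (ha : IsUnit a) (h : SemiconjBy a x y) : x = 0 ↔ y = 0 := by
  constructor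
  · rintro rfl
    exact ha.mul_left_eq_zero.1 (by rw [← h.eq, mul_zero])
  · rintro rfl
    exact ha.mul_right_eq_zero.1 (by rw [h.eq, zero_mul])

theorem Fintype.prod_eq_pow_card_iff_of_le {ι : Type*} [Fintype ι] {f : ι → ℕ} {n : ℕ}
    (h : ∀ i, f i ≤ n) : ∏ i, f i = n ^ Fintype.card ι ↔ ∀ i, f i = n := by
  classical
  refine ⟨fun hprod i => ?_, fun h => by simp [h]⟩
  by_contra hne
  have hlt : f i < n := (h i).lt_of_ne hne
  have hcard : Fintype.card ι = (Finset.univ.erase i).card + 1 := by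
    rw [Finset.card_erase_add_one (Finset.mem_univ i), Finset.card_univ]
  have : ∏ j, f j < n ^ Fintype.card ι := calc
    ∏ j, f j = f i * ∏ j ∈ Finset.univ.erase i, f j :=
        (Finset.mul_prod_erase _ _ (Finset.mem_univ i)).symm
    _ ≤ f i * n ^ (Finset.univ.erase i).card :=
        Nat.mul_le_mul_left _ (Finset.prod_le_pow_card _ _ _ fun j _ => h j)
    _ < n * n ^ (Finset.univ.erase i).card :=
        Nat.mul_lt_mul_of_pos_right hlt (pow_pos (by omega) _)
    _ = n ^ Fintype.card ι := by rw [hcard, pow_succ']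
  exact this.ne hprod

section Fourier

variable {d : ℕ}

theorem pow_val_sub {G : Type*} [GroupWithZero G] [NeZero d] {u : G} (hu : u ^ d = 1)
    (j m : Fin d) : u ^ ((j - m : Fin d) : ℕ) = u ^ (j : ℕ) * u⁻¹ ^ (m : ℕ) := by
  have hu0 : u ≠ 0 := by
    rintro rfl
    simp [zero_pow (NeZero.ne d)] at hu
  rw [inv_pow, eq_mul_inv_iff_mul_eq₀ (pow_ne_zero _ hu0), ← pow_add, pow_eq_pow_mod _ hu,
    ← Fin.val_add, sub_add_cancel]

def dftMatrix {R : Type*} [CommRing R] (w : R) : Matrix (Fin d) (Fin d) R :=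
  vandermonde fun i => w ^ (i : ℕ)

def dft {R : Type*} [CommRing R] (w : R) (x : Fin d → R) (i : Fin d) : R :=
  ∑ j, x j * w ^ ((i : ℕ) * (j : ℕ))

theorem dftMatrix_apply {R : Type*} [CommRing R] (w : R) (i j : Fin d) :
    dftMatrix w i j = w ^ ((i : ℕ) * (j : ℕ)) := by
  rw [dftMatrix, vandermonde_apply, pow_mul]

theorem dft_eq_mulVec {R : Type*} [CommRing R] (w : R) :
    dft (d := d) w = (dftMatrix w *ᵥ ·) := by
  ext x i
  simp only [dft, mulVec, dotProduct, dftMatrix_apply, mul_comm]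

theorem isUnit_dftMatrix {K : Type*} [Field K] {w : K} (hw : IsPrimitiveRoot w d) :
    IsUnit (dftMatrix (d := d) w) := by
  rw [isUnit_iff_isUnit_det, isUnit_iff_ne_zero, dftMatrix, det_vandermonde_ne_zero_iff]
  exact fun i j h => Fin.ext (hw.pow_inj i.isLt j.isLt h)

theorem dft_bijective {K : Type*} [Field K] {w : K} (hw : IsPrimitiveRoot w d) :
    Function.Bijective (dft (d := d) w) := by
  rw [dft_eq_mulVec]
  exact ⟨mulVec_injective_iff_isUnit.2 (isUnit_dftMatrix hw),
    mulVec_surjective_iff_isUnit.2 (isUnit_dftMatrix hw)⟩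

variable [NeZero d]

theorem circ_injective : Function.Injective (circ (d := d)) :=
  fun x y h => funext fun j => by simpa [circ] using congr_fun (congr_fun h 0) j

theorem semiconjBy_dftMatrix_circ {w : ℂ} (hw : w ^ d = 1) (a : Fin d → ℂ) :
    SemiconjBy (dftMatrix w) (circ a) (diagonal (dft w⁻¹ a)) := by
  unfold SemiconjBy
  ext i j
  rw [diagonal_mul, mul_apply]
  simp only [dftMatrix_apply, circ, dft, Finset.sum_mul]
  refine (Fintype.sum_equiv (Equiv.subLeft j) _ _ fun m => ?_).symm
  have hu : (w ^ (i : ℕ)) ^ d = 1 := by rw [← pow_mul, mul_comm, pow_mul, hw, one_pow]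
  rw [Equiv.subLeft_apply, sub_sub_cancel, pow_mul w _ ((j - m : Fin d) : ℕ), pow_val_sub hu,
    pow_mul, inv_pow]
  ring

variable {n : ℕ} {w : ℂ}

theorem monicEval_circ_eq_zero_iff (hw : IsPrimitiveRoot w d) (a : Fin n → Fin d → ℂ)
    (x : Fin d → ℂ) :
    monicEval (fun k => circ (a k)) (circ x) = 0 ↔
      ∀ i, monicEval (fun k => dft w⁻¹ (a k) i) (dft w⁻¹ x i) = 0 := by
  have h := SemiconjBy.monicEval (fun k => semiconjBy_dftMatrix_circ hw.pow_eq_one (a k))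
    (semiconjBy_dftMatrix_circ hw.pow_eq_one x)
  rw [h.eq_zero_iff_of_isUnit (isUnit_dftMatrix hw), monicEval_diagonal, diagonal_eq_zero,
    funext_iff]
  simp only [monicEval_apply, Pi.zero_apply]

theorem circ_solutions_eq (hw : IsPrimitiveRoot w d) (a : Fin n → Fin d → ℂ) :
    {M | IsCirc M ∧ monicEval (fun k => circ (a k)) M = 0} =
      circ '' (dft w⁻¹ ⁻¹' Fintype.piFinset fun i =>
        (monicEval (fun k => C (dft w⁻¹ (a k) i)) X).roots.toFinset) := by
  ext M
  simp only [Set.mem_ofPred_eq, Set.mem_image, Set.mem_preimage, Finset.mem_coe,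
    Fintype.mem_piFinset, mem_roots_toFinset_monicEval]
  constructor
  · rintro ⟨⟨x, rfl⟩, hM⟩
    exact ⟨x, (monicEval_circ_eq_zero_iff hw a x).1 hM, rfl⟩
  · rintro ⟨x, hx, rfl⟩
    exact ⟨⟨x, rfl⟩, (monicEval_circ_eq_zero_iff hw a x).2 hx⟩

theorem ncard_circ_solutions (hw : IsPrimitiveRoot w d) (a : Fin n → Fin d → ℂ) :
    {M | IsCirc M ∧ monicEval (fun k => circ (a k)) M = 0}.ncard =
      ∏ i, (monicEval (fun k => C (dft w⁻¹ (a k) i)) X).roots.toFinset.card := by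
  have hdft := dft_bijective (d := d) hw.inv
  rw [circ_solutions_eq hw, Set.ncard_image_of_injective _ circ_injective,
    Set.ncard_preimage_of_injective_subset_range hdft.1 (by simp [hdft.2.range_eq]),
    Set.ncard_coe_finset, Fintype.card_piFinset]

end Fourier

theorem stmt18_general (d n : ℕ) [NeZero d] (a : Fin n → Fin d → ℂ) :
    {X : Matrix (Fin d) (Fin d) ℂ | IsCirc X ∧
        X ^ n + ∑ k : Fin n, circ (a k) * X ^ (n - 1 - (k : ℕ)) = 0}.ncard = n ^ d ↔
    ∀ i : Fin d,
      ((Polynomial.X ^ n + ∑ k : Fin n,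
          Polynomial.C (∑ j : Fin d, a k j * ((ζ d)⁻¹) ^ ((i : ℕ) * (j : ℕ))) *
            Polynomial.X ^ (n - 1 - (k : ℕ)) : Polynomial ℂ)).roots.toFinset.card = n := by
  have hζ : IsPrimitiveRoot (ζ d) d := Complex.isPrimitiveRoot_exp d (NeZero.ne d)
  have hcount := Fintype.prod_eq_pow_card_iff_of_le fun i =>
    card_roots_toFinset_monicEval_le fun k => dft (ζ d)⁻¹ (a k) i
  rwa [Fintype.card_fin, ← ncard_circ_solutions hζ] at hcount

theorem stmt18 (d n : ℕ) [NeZero d] (hn : 1 ≤ n) (a : Fin n → Fin d → ℂ) :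
    {X : Matrix (Fin d) (Fin d) ℂ | IsCirc X ∧
        X ^ n + ∑ k : Fin n, circ (a k) * X ^ (n - 1 - (k : ℕ)) = 0}.ncard = n ^ d ↔
    ∀ i : Fin d,
      ((Polynomial.X ^ n + ∑ k : Fin n,
          Polynomial.C (∑ j : Fin d, a k j * ((ζ d)⁻¹) ^ ((i : ℕ) * (j : ℕ))) *
            Polynomial.X ^ (n - 1 - (k : ℕ)) : Polynomial ℂ)).roots.toFinset.card = n :=
  stmt18_general d n a
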